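/- arXiv:2312.17167 — 4 statements merged into one kernel-verified Lean document; each statement's English description precedes it below -/
import Mathlib

section
/- If μ(1-F_H(x̂)) / ((1-μ)(1-F_L(x̂))) > φ, then there exists ε₀ > 0 such that for all q ∈ (1/2, 1/2+ε₀), the correctness with a mechanical gatekeeper of quality q is strictly less than the no-gatekeeper correctness. -/
open Set

/-- Theorem 2, part 2: if `μ(1-F_H(x̂)) / ((1-μ)(1-F_L(x̂))) > φ`, then for all `q`
slightly above `1/2`, the mechanical gatekeeper strictly lowers correctness. -/
theorem low_quality_gatekeeper_hurts
    (FH FL : ℝ → ℝ) (μ γ α φ : ℝ)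
    (hFHc : Continuous FH) (hFLc : Continuous FL)
    (hμ : μ ∈ Ioo (0:ℝ) 1) (hφ : φ ∈ Ioo (0:ℝ) 1) (hα : 0 < α)
    (hαφ : α * φ < γ) (hγ : γ < 1)
    (x : ℝ → ℝ)
    (hx : ∀ q, x q = ((γ - α * φ) * (1 - μ) * (1 - q)) /
        ((γ - α * φ) * (1 - μ) * (1 - q) + (1 - γ) * μ * q))
    (hFL : 0 < 1 - FL (x (1/2)))
    (hcond : φ < μ * (1 - FH (x (1/2))) / ((1 - μ) * (1 - FL (x (1/2))))) :
    ∃ ε₀ > (0:ℝ), ∀ q : ℝ, 1/2 < q → q < 1/2 + ε₀ →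
      μ * q * (1 - FH (x q)) + (1 - μ) * (1 - (1 - FL (x q)) * (1 - q) * φ)
        < μ * (1 - FH (x (1/2))) + (1 - μ) * (1 - (1 - FL (x (1/2))) * φ) := by
  obtain ⟨hμ0, hμ1⟩ := hμ
  obtain ⟨hφ0, hφ1⟩ := hφ
  have hxf : x = fun q => ((γ - α * φ) * (1 - μ) * (1 - q)) /
        ((γ - α * φ) * (1 - μ) * (1 - q) + (1 - γ) * μ * q) := funext hx
  have hden : ((γ - α * φ) * (1 - μ) * (1 - (1/2:ℝ)) + (1 - γ) * μ * (1/2)) ≠ 0 := by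
    nlinarith
  have hxc : ContinuousAt x (1/2) := by
    rw [hxf]
    exact ContinuousAt.div (by fun_prop) (by fun_prop) hden
  have hH : ContinuousAt (fun q => FH (x q)) (1/2) := hFHc.continuousAt.comp hxc
  have hL : ContinuousAt (fun q => FL (x q)) (1/2) := hFLc.continuousAt.comp hxc
  set g : ℝ → ℝ := fun q =>
    μ * q * (1 - FH (x q)) + (1 - μ) * (1 - (1 - FL (x q)) * (1 - q) * φ) with hg
  have hgc : ContinuousAt g (1/2) := by
    apply ContinuousAt.add
    · exact ((continuousAt_const.mul continuousAt_id).mul (continuousAt_const.sub hH))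
    · exact continuousAt_const.mul (continuousAt_const.sub
        (((continuousAt_const.sub hL).mul
          (continuousAt_const.sub continuousAt_id)).mul continuousAt_const))
  have hB : (0:ℝ) < (1 - μ) * (1 - FL (x (1/2))) :=
    mul_pos (by linarith) hFL
  have hcond' : φ * ((1 - μ) * (1 - FL (x (1/2)))) < μ * (1 - FH (x (1/2))) :=
    (lt_div_iff₀ hB).mp hcond
  have hlt : g (1/2) <
      μ * (1 - FH (x (1/2))) + (1 - μ) * (1 - (1 - FL (x (1/2))) * φ) := by
    simp only [hg]
    nlinarith
  have hev : ∀ᶠ q in nhds (1/2:ℝ), g q <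
      μ * (1 - FH (x (1/2))) + (1 - μ) * (1 - (1 - FL (x (1/2))) * φ) :=
    hgc.eventually_lt continuousAt_const hlt
  rw [Metric.eventually_nhds_iff] at hev
  obtain ⟨ε, hε, h⟩ := hev
  refine ⟨ε, hε, fun q hq1 hq2 => ?_⟩
  have : dist q (1/2) < ε := by
    rw [Real.dist_eq, abs_lt]; constructor <;> linarith
  exact h this
end

section
/- If μ(1-F_H(x̂)) / ((1-μ)(1-F_L(x̂))) < φ, then there exists ε₀ > 0 such that for all q ∈ (1/2, 1/2+ε₀), the correctness with a mechanical gatekeeper of quality q is strictly greater than the no-gatekeeper correctness. -/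
open Set

/-- Theorem 2, part 3: if `μ(1-F_H(x̂)) / ((1-μ)(1-F_L(x̂))) < φ`, then for all `q`
slightly above `1/2`, the mechanical gatekeeper strictly improves correctness. -/
theorem low_quality_gatekeeper_helps
    (FH FL : ℝ → ℝ) (μ γ α φ : ℝ)
    (hFHc : Continuous FH) (hFLc : Continuous FL)
    (hμ : μ ∈ Ioo (0:ℝ) 1) (hφ : φ ∈ Ioo (0:ℝ) 1) (hα : 0 < α)
    (hαφ : α * φ < γ) (hγ : γ < 1)
    (x : ℝ → ℝ)
    (hx : ∀ q, x q = ((γ - α * φ) * (1 - μ) * (1 - q)) /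
        ((γ - α * φ) * (1 - μ) * (1 - q) + (1 - γ) * μ * q))
    (hFL : 0 < 1 - FL (x (1/2)))
    (hcond : μ * (1 - FH (x (1/2))) / ((1 - μ) * (1 - FL (x (1/2)))) < φ) :
    ∃ ε₀ > (0:ℝ), ∀ q : ℝ, 1/2 < q → q < 1/2 + ε₀ →
      μ * (1 - FH (x (1/2))) + (1 - μ) * (1 - (1 - FL (x (1/2))) * φ)
        < μ * q * (1 - FH (x q)) + (1 - μ) * (1 - (1 - FL (x q)) * (1 - q) * φ) := by
  obtain ⟨hμ0, hμ1⟩ := hμ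
  obtain ⟨hφ0, hφ1⟩ := hφ
  set X : ℝ → ℝ := fun q => ((γ - α * φ) * (1 - μ) * (1 - q)) /
      ((γ - α * φ) * (1 - μ) * (1 - q) + (1 - γ) * μ * q) with hX
  have hxX : ∀ q, x q = X q := hx
  set F : ℝ → ℝ := fun q =>
    μ * q * (1 - FH (X q)) + (1 - μ) * (1 - (1 - FL (X q)) * (1 - q) * φ) with hF
  set c : ℝ := μ * (1 - FH (x (1/2))) + (1 - μ) * (1 - (1 - FL (x (1/2))) * φ) with hc
  -- denominator positive at 1/2
  have hden : (0:ℝ) < (γ - α * φ) * (1 - μ) * (1 - (1/2)) + (1 - γ) * μ * (1/2) := by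
    nlinarith
  have hXc : ContinuousAt X (1/2) := by
    apply ContinuousAt.div
    · fun_prop
    · fun_prop
    · exact ne_of_gt hden
  have hFc : ContinuousAt F (1/2) := by
    apply ContinuousAt.add
    · exact (continuousAt_const.mul continuousAt_id).mul
        (continuousAt_const.sub (hFHc.continuousAt.comp hXc))
    · exact continuousAt_const.mul (continuousAt_const.sub
        (((continuousAt_const.sub (hFLc.continuousAt.comp hXc)).mul
          (continuousAt_const.sub continuousAt_id)).mul continuousAt_const))
  have hpos : (0:ℝ) < (1 - μ) * (1 - FL (x (1/2))) := mul_pos (by linarith) hFL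
  have hcd : μ * (1 - FH (x (1/2))) < φ * ((1 - μ) * (1 - FL (x (1/2)))) :=
    (div_lt_iff₀ hpos).mp hcond
  have hkey : c < F (1/2) := by
    have hx12 : x (1/2) = X (1/2) := hxX (1/2)
    rw [hx12] at hcd
    simp only [hF, hc, hx12]
    nlinarith [hcd]
  have hmem : F ⁻¹' (Ioi c) ∈ nhds (1/2 : ℝ) := hFc (Ioi_mem_nhds hkey)
  rcases Metric.mem_nhds_iff.mp hmem with ⟨δ, hδ, hball⟩
  refine ⟨δ, hδ, fun q h1 h2 => ?_⟩
  have hq : q ∈ Metric.ball (1/2 : ℝ) δ := by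
    rw [Metric.mem_ball, Real.dist_eq, abs_lt]
    constructor <;> linarith
  have := hball hq
  simp only [mem_preimage, mem_Ioi] at this
  calc c < F q := this
    _ = _ := by simp only [hF, hxX q]
end

section
/- The threshold x(σ) = ((γ-φα)(1-μ)((1-q)+σq)) / ((γ-φα)(1-μ)((1-q)+σq) + (1-γ)μ(q+σ(1-q))) is strictly increasing in σ on [0,1] whenever q ∈ (1/2, 1]. -/
open Set

/-- Proposition 2: the candidate's threshold `x(σ)` under a strategic gatekeeper is
strictly increasing in the no-screening probability `σ` on `[0,1]` when `q ∈ (1/2,1]`. -/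
theorem strategic_threshold_strictMono (μ γ α φ q : ℝ)
    (hμ : μ ∈ Ioo (0:ℝ) 1) (hγ : γ ∈ Ioo (0:ℝ) 1)
    (hα : 0 < α) (hφ : φ ∈ Ioo (0:ℝ) 1) (hαφ : φ * α < γ)
    (hq : q ∈ Ioc (1/2 : ℝ) 1) :
    StrictMonoOn (fun σ : ℝ =>
      ((γ - φ * α) * (1 - μ) * ((1 - q) + σ * q)) /
        ((γ - φ * α) * (1 - μ) * ((1 - q) + σ * q) + (1 - γ) * μ * (q + σ * (1 - q))))
      (Icc (0:ℝ) 1) := by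
  intro a ha b hb hab
  obtain ⟨hμ0, hμ1⟩ := hμ
  obtain ⟨hγ0, hγ1⟩ := hγ
  obtain ⟨hq0, hq1⟩ := hq
  have hA : 0 < (γ - φ * α) * (1 - μ) := by nlinarith
  have hB : 0 < (1 - γ) * μ := by nlinarith
  have hua : 0 ≤ (1 - q) + a * q := by nlinarith [ha.1, ha.2]
  have hub : 0 ≤ (1 - q) + b * q := by nlinarith [hb.1, hb.2]
  have hva : 0 < q + a * (1 - q) := by nlinarith [ha.1, ha.2]
  have hvb : 0 < q + b * (1 - q) := by nlinarith [hb.1, hb.2]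
  have hda : 0 < (γ - φ * α) * (1 - μ) * ((1 - q) + a * q) + (1 - γ) * μ * (q + a * (1 - q)) := by
    positivity
  have hdb : 0 < (γ - φ * α) * (1 - μ) * ((1 - q) + b * q) + (1 - γ) * μ * (q + b * (1 - q)) := by
    positivity
  simp only
  rw [div_lt_div_iff₀ hda hdb]
  nlinarith [mul_pos hA hB, mul_pos (mul_pos hA hB) (mul_pos (sub_pos.2 hab) (by nlinarith : (0:ℝ) < 2 * q - 1))]
end

section
/- There exists μ̄ < 1 such that for all μ ≥ μ̄, the derivative of the gatekeeper's utility U_K(σ) = μ(1-F_H(x(σ)))(q+σ(1-q)) - dφ(1-μ)(1-F_L(x(σ)))((1-q)+qσ) with respect to σ, evaluated at σ = 0, is strictly positive; hence σ = 0 (the mechanical strategy) is not a local maximum. -/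
open Set

/-- Threshold of the candidate when the gatekeeper waives screening with probability `σ`. -/
noncomputable def gkThreshold (γ α φ q μ σ : ℝ) : ℝ :=
  ((γ - φ * α) * (1 - μ) * ((1 - q) + σ * q)) /
    ((γ - φ * α) * (1 - μ) * ((1 - q) + σ * q) + (1 - γ) * μ * (q + σ * (1 - q)))

/-- value of the threshold at σ = 0 -/
noncomputable def gkX (q γ α φ μ : ℝ) : ℝ :=
  (γ - φ * α) * (1 - μ) * (1 - q) / ((γ - φ * α) * (1 - μ) * (1 - q) + (1 - γ) * μ * q)

/-- derivative of the threshold in σ at σ = 0 -/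
noncomputable def gkXP (q γ α φ μ : ℝ) : ℝ :=
  ((γ - φ * α) * (1 - μ) * q * ((γ - φ * α) * (1 - μ) * (1 - q) + (1 - γ) * μ * q) -
      (γ - φ * α) * (1 - μ) * (1 - q) * ((γ - φ * α) * (1 - μ) * q + (1 - γ) * μ * (1 - q))) /
    ((γ - φ * α) * (1 - μ) * (1 - q) + (1 - γ) * μ * q) ^ 2

/-- derivative of the gatekeeper's utility in σ at σ = 0 -/
noncomputable def gkDeriv (q d φ γ α : ℝ) (FH FL fH fL : ℝ → ℝ) (μ : ℝ) : ℝ :=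
  μ * -(fH (gkX q γ α φ μ) * gkXP q γ α φ μ) * q +
      μ * (1 - FH (gkX q γ α φ μ)) * (1 - q) -
    (d * φ * (1 - μ) * -(fL (gkX q γ α φ μ) * gkXP q γ α φ μ) * (1 - q) +
      d * φ * (1 - μ) * (1 - FL (gkX q γ α φ μ)) * q)

lemma gk_hasDerivAt (q d φ γ α μ : ℝ) (FH FL fH fL : ℝ → ℝ)
    (hFH : ∀ t, HasDerivAt FH (fH t) t) (hFL : ∀ t, HasDerivAt FL (fL t) t)
    (hden : (γ - φ * α) * (1 - μ) * ((1 - q) + 0 * q) + (1 - γ) * μ * (q + 0 * (1 - q)) ≠ 0) :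
    HasDerivAt (fun σ : ℝ =>
        μ * (1 - FH (gkThreshold γ α φ q μ σ)) * (q + σ * (1 - q))
          - d * φ * (1 - μ) * (1 - FL (gkThreshold γ α φ q μ σ)) * ((1 - q) + q * σ))
      (gkDeriv q d φ γ α FH FL fH fL μ) 0 := by
  have hlin2 : HasDerivAt (fun σ:ℝ => q+σ*(1-q)) (1-q) 0 := by
    simpa using ((hasDerivAt_id (0:ℝ)).mul_const (1-q)).const_add q
  have hlin3 : HasDerivAt (fun σ:ℝ => (1-q)+q*σ) q 0 := by
    simpa using ((hasDerivAt_id (0:ℝ)).const_mul q).const_add (1-q)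
  have hnum : HasDerivAt (fun σ:ℝ => (γ - φ*α)*(1-μ)*((1-q)+σ*q)) ((γ-φ*α)*(1-μ)*q) 0 := by
    have hlin1 : HasDerivAt (fun σ:ℝ => (1-q)+σ*q) q 0 := by
      simpa using ((hasDerivAt_id (0:ℝ)).mul_const q).const_add (1-q)
    simpa [mul_assoc] using hlin1.const_mul ((γ-φ*α)*(1-μ))
  have hden2 : HasDerivAt (fun σ:ℝ => (γ - φ*α)*(1-μ)*((1-q)+σ*q) + (1-γ)*μ*(q+σ*(1-q)))
      ((γ-φ*α)*(1-μ)*q + (1-γ)*μ*(1-q)) 0 := by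
    have h2 : HasDerivAt (fun σ:ℝ => (1-γ)*μ*(q+σ*(1-q))) ((1-γ)*μ*(1-q)) 0 := by
      simpa [mul_assoc] using hlin2.const_mul ((1-γ)*μ)
    exact hnum.add h2
  have hx := hnum.div hden2 hden
  have hFHx := (hFH _).comp 0 hx
  have hFLx := (hFL _).comp 0 hx
  have hU := (((hFHx.const_sub 1).const_mul μ).mul hlin2).sub
    (((hFLx.const_sub 1).const_mul (d*φ*(1-μ))).mul hlin3)
  unfold gkThreshold gkDeriv gkX gkXP
  simp only [Pi.div_apply, Pi.mul_apply, Pi.sub_apply, mul_zero, zero_mul, add_zero, Function.comp] at hU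
  exact hU

/-- Theorem 3: there is `μ̄ < 1` such that for all priors `μ ≥ μ̄`, the derivative of the
gatekeeper's utility in `σ` at `σ = 0` is strictly positive, so the mechanical strategy
`σ = 0` is not optimal. -/
theorem strategic_gatekeeping_beats_mechanical
    (q d φ γ α : ℝ) (FH FL fH fL : ℝ → ℝ)
    (hq : q ∈ Ioo (1/2 : ℝ) 1) (hd : 0 < d) (hφ : φ ∈ Ioo (0:ℝ) 1)
    (hα : 0 < α) (hαγ : φ * α < γ) (hγ : γ < 1)
    (hFH : ∀ t, HasDerivAt FH (fH t) t) (hFL : ∀ t, HasDerivAt FL (fL t) t)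
    (hfHc : Continuous fH) (hfLc : Continuous fL)
    (hbH : ∃ M, ∀ t, |fH t| ≤ M) (hbL : ∃ M, ∀ t, |fL t| ≤ M)
    (hFH0 : FH 0 = 0) (hFL0 : FL 0 = 0) :
    ∃ μbar : ℝ, μbar < 1 ∧ ∀ μ : ℝ, μbar ≤ μ → μ < 1 →
      0 < deriv (fun σ : ℝ =>
        μ * (1 - FH (gkThreshold γ α φ q μ σ)) * (q + σ * (1 - q))
          - d * φ * (1 - μ) * (1 - FL (gkThreshold γ α φ q μ σ)) * ((1 - q) + q * σ)) 0 := by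
  obtain ⟨hq2, hq1⟩ := hq
  have hc1 : 0 < γ - φ * α := by linarith
  have hc2 : 0 < 1 - γ := by linarith
  have hqpos : 0 < q := by linarith
  have hq1' : 0 < 1 - q := by linarith
  -- continuity of gkDeriv at μ = 1
  have hFHcont : Continuous FH := by
    rw [continuous_iff_continuousAt]; exact fun t => (hFH t).continuousAt
  have hFLcont : Continuous FL := by
    rw [continuous_iff_continuousAt]; exact fun t => (hFL t).continuousAt
  have hdenc : Continuous (fun μ : ℝ => (γ - φ * α) * (1 - μ) * (1 - q) + (1 - γ) * μ * q) := by
    continuity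
  have hden1 : (γ - φ * α) * (1 - (1:ℝ)) * (1 - q) + (1 - γ) * (1:ℝ) * q ≠ 0 := by
    have : (γ - φ * α) * (1 - (1:ℝ)) * (1 - q) + (1 - γ) * (1:ℝ) * q = (1 - γ) * q := by ring
    rw [this]; positivity
  have hXc : ContinuousAt (fun μ => gkX q γ α φ μ) 1 := by
    unfold gkX
    exact ContinuousAt.div (by fun_prop) hdenc.continuousAt hden1
  have hXPc : ContinuousAt (fun μ => gkXP q γ α φ μ) 1 := by
    unfold gkXP
    exact ContinuousAt.div (by fun_prop) (hdenc.continuousAt.pow 2) (pow_ne_zero 2 hden1)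
  have hEc : ContinuousAt (gkDeriv q d φ γ α FH FL fH fL) 1 := by
    unfold gkDeriv
    have h1 : ContinuousAt (fun μ => fH (gkX q γ α φ μ)) 1 := hfHc.continuousAt.comp hXc
    have h2 : ContinuousAt (fun μ => fL (gkX q γ α φ μ)) 1 := hfLc.continuousAt.comp hXc
    have h3 : ContinuousAt (fun μ => FH (gkX q γ α φ μ)) 1 := hFHcont.continuousAt.comp hXc
    have h4 : ContinuousAt (fun μ => FL (gkX q γ α φ μ)) 1 := hFLcont.continuousAt.comp hXc
    exact ((((continuousAt_id.mul ((h1.mul hXPc).neg)).mul continuousAt_const).add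
        (((continuousAt_id.mul (continuousAt_const.sub h3)).mul continuousAt_const)))).sub
      (((((continuousAt_const.mul (continuousAt_const.sub continuousAt_id)).mul
          ((h2.mul hXPc).neg)).mul continuousAt_const).add
        ((((continuousAt_const.mul (continuousAt_const.sub continuousAt_id)).mul
          (continuousAt_const.sub h4)).mul continuousAt_const))))
  have hE1 : gkDeriv q d φ γ α FH FL fH fL 1 = 1 - q := by
    have hX1 : gkX q γ α φ 1 = 0 := by
      unfold gkX; norm_num
    have hXP1 : gkXP q γ α φ 1 = 0 := by
      unfold gkXP
      rw [div_eq_iff (pow_ne_zero 2 hden1)]; ring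
    unfold gkDeriv
    rw [hX1, hXP1, hFH0]; ring
  have hpos : (0:ℝ) < gkDeriv q d φ γ α FH FL fH fL 1 := by rw [hE1]; linarith
  have hev : ∀ᶠ μ in nhds 1, 0 < gkDeriv q d φ γ α FH FL fH fL μ :=
    hEc.eventually (eventually_gt_nhds hpos)
  rw [Metric.eventually_nhds_iff] at hev
  obtain ⟨ε, hε, hball⟩ := hev
  refine ⟨max (1 - ε/2) (1/2), ?_, ?_⟩
  · apply max_lt <;> linarith
  intro μ hμ hμ1
  have hμhalf : (1:ℝ)/2 ≤ μ := le_trans (le_max_right _ _) hμ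
  have hμlow : 1 - ε/2 ≤ μ := le_trans (le_max_left _ _) hμ
  have hμpos : 0 < μ := by linarith
  have h1μ : 0 < 1 - μ := by linarith
  have hden : (γ - φ * α) * (1 - μ) * ((1 - q) + 0 * q) + (1 - γ) * μ * (q + 0 * (1 - q)) ≠ 0 := by
    have h1 : 0 < (γ - φ * α) * (1 - μ) * ((1 - q) + 0 * q) := by
      rw [zero_mul, add_zero]; positivity
    have h2 : 0 < (1 - γ) * μ * (q + 0 * (1 - q)) := by
      rw [zero_mul, add_zero]; positivity
    positivity
  have hD := gk_hasDerivAt q d φ γ α μ FH FL fH fL hFH hFL hden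
  rw [hD.deriv]
  apply hball
  rw [Real.dist_eq]
  rw [abs_sub_lt_iff]
  constructor <;> linarith
end
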